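/- arXiv:2404.01608 — 3 statements merged into one kernel-verified Lean document; each statement's English description precedes it below -/
import Mathlib

section
/- Assume the diversity condition and I* ≠ ∅. Then the set of FAIRM solutions equals the set of full-information FAIRM solutions; in particular, for every FAIRM solution (w^F, Φ^F), every full-information FAIRM solution (w*, Φ*), and every e ∈ E, R^e(w^F∘Φ^F) = R^e(w*∘Φ*). -/
open MeasureTheory

noncomputable section

/-- `E[u(Φ(x^e)) * y^e]`, the covariance-type moment in environment `e`. -/
def covT {p q : ℕ} {E : Type} (P : E → Measure ((Fin p → ℝ) × ℝ))
    (Φ : (Fin p → ℝ) → (Fin q → ℝ)) (u : (Fin q → ℝ) → ℝ) (e : E) : ℝ :=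
  ∫ z, u (Φ z.1) * z.2 ∂(P e)

/-- `E[(u(Φ(x^e)))²]`, the second-moment term in environment `e`. -/
def sqT {p q : ℕ} {E : Type} (P : E → Measure ((Fin p → ℝ) × ℝ))
    (Φ : (Fin p → ℝ) → (Fin q → ℝ)) (u : (Fin q → ℝ) → ℝ) (e : E) : ℝ :=
  ∫ z, (u (Φ z.1)) ^ 2 ∂(P e)

/-- The risk `R^e(f) = E[(y^e - f(x^e))²]`. -/
def risk {p : ℕ} {E : Type} (P : E → Measure ((Fin p → ℝ) × ℝ))
    (f : (Fin p → ℝ) → ℝ) (e : E) : ℝ :=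
  ∫ z, (z.2 - f z.1) ^ 2 ∂(P e)

/-- The set `I*` of invariant representations. -/
def InvSet {p q : ℕ} {E : Type} (P : E → Measure ((Fin p → ℝ) × ℝ))
    (FΦ : Set ((Fin p → ℝ) → (Fin q → ℝ))) (Fw : Set ((Fin q → ℝ) → ℝ)) :
    Set ((Fin p → ℝ) → (Fin q → ℝ)) :=
  {Φ | Φ ∈ FΦ ∧ ∀ u ∈ Fw, ∀ e e' : E,
    covT P Φ u e = covT P Φ u e' ∧ sqT P Φ u e = sqT P Φ u e'}

/-- The training-feasible set `I_tr`. -/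
def TrFeas {p q : ℕ} {E : Type} (P : E → Measure ((Fin p → ℝ) × ℝ)) (Etr : Finset E)
    (FΦ : Set ((Fin p → ℝ) → (Fin q → ℝ))) (Fw : Set ((Fin q → ℝ) → ℝ)) :
    Set ((Fin p → ℝ) → (Fin q → ℝ)) :=
  {Φ | Φ ∈ FΦ ∧ ∀ u ∈ Fw, ∀ e ∈ Etr, ∀ e' ∈ Etr,
    covT P Φ u e = covT P Φ u e' ∧ sqT P Φ u e = sqT P Φ u e'}

/-- Diversity condition on the training environments. -/
def Diversity {p q : ℕ} {E : Type} (P : E → Measure ((Fin p → ℝ) × ℝ)) (Etr : Finset E)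
    (FΦ : Set ((Fin p → ℝ) → (Fin q → ℝ))) (Fw : Set ((Fin q → ℝ) → ℝ)) : Prop :=
  ∀ Φ ∈ FΦ, Φ ∉ InvSet P FΦ Fw → ∃ u ∈ Fw, ∃ e ∈ Etr, ∃ e' ∈ Etr,
    covT P Φ u e ≠ covT P Φ u e' ∨ sqT P Φ u e ≠ sqT P Φ u e'

/-- Regularity: measurability and finiteness of all relevant expectations. -/
def Regular {p q : ℕ} {E : Type} (P : E → Measure ((Fin p → ℝ) × ℝ))
    (FΦ : Set ((Fin p → ℝ) → (Fin q → ℝ))) (Fw : Set ((Fin q → ℝ) → ℝ)) : Prop :=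
  (∀ Φ ∈ FΦ, Measurable Φ) ∧ (∀ w ∈ Fw, Measurable w) ∧
  (∀ e : E, MemLp (fun z : (Fin p → ℝ) × ℝ => z.2) 2 (P e)) ∧
  (∀ (e : E) (j : Fin p), MemLp (fun z : (Fin p → ℝ) × ℝ => z.1 j) 2 (P e)) ∧
  (∀ Φ ∈ FΦ, ∀ u ∈ Fw, ∀ e : E,
    Integrable (fun z : (Fin p → ℝ) × ℝ => u (Φ z.1) * z.2) (P e) ∧
    Integrable (fun z : (Fin p → ℝ) × ℝ => (u (Φ z.1)) ^ 2) (P e) ∧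
    Integrable (fun z : (Fin p → ℝ) × ℝ => (z.2 - u (Φ z.1)) ^ 2) (P e))

/-- A FAIRM solution: minimizer of the weighted training risk over `F_w × I_tr`. -/
def IsFairmSol {p q : ℕ} {E : Type} (P : E → Measure ((Fin p → ℝ) × ℝ)) (Etr : Finset E)
    (FΦ : Set ((Fin p → ℝ) → (Fin q → ℝ))) (Fw : Set ((Fin q → ℝ) → ℝ)) (α : E → ℝ)
    (w : (Fin q → ℝ) → ℝ) (Φ : (Fin p → ℝ) → (Fin q → ℝ)) : Prop :=
  w ∈ Fw ∧ Φ ∈ TrFeas P Etr FΦ Fw ∧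
  ∀ w' ∈ Fw, ∀ Φ' ∈ TrFeas P Etr FΦ Fw,
    ∑ e ∈ Etr, α e * risk P (fun x => w (Φ x)) e ≤
      ∑ e ∈ Etr, α e * risk P (fun x => w' (Φ' x)) e

/-- A full-information FAIRM solution: minimizer of the weighted risk over `F_w × I*`. -/
def IsFullSol {p q : ℕ} {E : Type} [Fintype E] (P : E → Measure ((Fin p → ℝ) × ℝ))
    (FΦ : Set ((Fin p → ℝ) → (Fin q → ℝ))) (Fw : Set ((Fin q → ℝ) → ℝ)) (αs : E → ℝ)
    (w : (Fin q → ℝ) → ℝ) (Φ : (Fin p → ℝ) → (Fin q → ℝ)) : Prop :=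
  w ∈ Fw ∧ Φ ∈ InvSet P FΦ Fw ∧
  ∀ w' ∈ Fw, ∀ Φ' ∈ InvSet P FΦ Fw,
    ∑ e : E, αs e * risk P (fun x => w (Φ x)) e ≤
      ∑ e : E, αs e * risk P (fun x => w' (Φ' x)) e

/-! On an invariant representation `Φ` the moments `E[u(Φ(x^e)) y^e]` and `E[u(Φ(x^e))²]` do
not depend on `e`, so by `R^e(w∘Φ) = E[(y^e)²] - 2 E[w(Φ(x^e)) y^e] + E[w(Φ(x^e))²]` the risks of
two invariant predictors differ by the same amount in every environment. Hence any weighted risk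
with weights summing to one orders `F_w × I*` exactly as the risk of a single environment does.
The diversity condition gives `I_tr = I*`, so FAIRM and full-information FAIRM minimise the same
order over the same set. -/

theorem Finset.sum_mul_sub_sum_mul_of_sub_eq {ι R : Type*} [CommRing R] {s : Finset ι}
    {a f g : ι → R} {c : R} (ha : ∑ i ∈ s, a i = 1) (hfg : ∀ i ∈ s, f i - g i = c) :
    ∑ i ∈ s, a i * f i - ∑ i ∈ s, a i * g i = c := by
  rw [← Finset.sum_sub_distrib]
  calc ∑ i ∈ s, (a i * f i - a i * g i) = ∑ i ∈ s, a i * c :=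
        Finset.sum_congr rfl fun i hi => by rw [← mul_sub, hfg i hi]
    _ = c := by rw [← Finset.sum_mul, ha, one_mul]

section Fairm

variable {p q : ℕ} {E : Type} {P : E → Measure ((Fin p → ℝ) × ℝ)}
  {FΦ : Set ((Fin p → ℝ) → (Fin q → ℝ))} {Fw : Set ((Fin q → ℝ) → ℝ)}

theorem risk_comp_eq {Φ : (Fin p → ℝ) → (Fin q → ℝ)} {u : (Fin q → ℝ) → ℝ} {e : E}
    (hy : MemLp (fun z : (Fin p → ℝ) × ℝ => z.2) 2 (P e))
    (hcov : Integrable (fun z : (Fin p → ℝ) × ℝ => u (Φ z.1) * z.2) (P e))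
    (hsq : Integrable (fun z : (Fin p → ℝ) × ℝ => (u (Φ z.1)) ^ 2) (P e)) :
    risk P (fun x => u (Φ x)) e =
      ∫ z, z.2 ^ 2 ∂(P e) - 2 * covT P Φ u e + sqT P Φ u e := by
  have hexpand : (fun z : (Fin p → ℝ) × ℝ => (z.2 - u (Φ z.1)) ^ 2) =
      fun z => z.2 ^ 2 - 2 * (u (Φ z.1) * z.2) + u (Φ z.1) ^ 2 := by
    funext z
    ring
  rw [risk, hexpand, integral_add ?_ hsq, integral_sub hy.integrable_sq (hcov.const_mul 2),
    integral_const_mul, covT, sqT]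
  exact hy.integrable_sq.sub (hcov.const_mul 2)

theorem risk_comp_eq_of_regular (hreg : Regular P FΦ Fw) {Φ : (Fin p → ℝ) → (Fin q → ℝ)}
    (hΦ : Φ ∈ FΦ) {u : (Fin q → ℝ) → ℝ} (hu : u ∈ Fw) (e : E) :
    risk P (fun x => u (Φ x)) e =
      ∫ z, z.2 ^ 2 ∂(P e) - 2 * covT P Φ u e + sqT P Φ u e :=
  risk_comp_eq (hreg.2.2.1 e) (hreg.2.2.2.2 Φ hΦ u hu e).1 (hreg.2.2.2.2 Φ hΦ u hu e).2.1

theorem risk_sub_risk_of_mem_invSet (hreg : Regular P FΦ Fw)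
    {w w' : (Fin q → ℝ) → ℝ} {Φ Φ' : (Fin p → ℝ) → (Fin q → ℝ)} (hw : w ∈ Fw) (hw' : w' ∈ Fw)
    (hΦ : Φ ∈ InvSet P FΦ Fw) (hΦ' : Φ' ∈ InvSet P FΦ Fw) (e e' : E) :
    risk P (fun x => w (Φ x)) e - risk P (fun x => w' (Φ' x)) e =
      risk P (fun x => w (Φ x)) e' - risk P (fun x => w' (Φ' x)) e' := by
  obtain ⟨hcov, hsq⟩ := hΦ.2 w hw e e'
  obtain ⟨hcov', hsq'⟩ := hΦ'.2 w' hw' e e'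
  rw [risk_comp_eq_of_regular hreg hΦ.1 hw, risk_comp_eq_of_regular hreg hΦ'.1 hw',
    risk_comp_eq_of_regular hreg hΦ.1 hw, risk_comp_eq_of_regular hreg hΦ'.1 hw',
    hcov, hsq, hcov', hsq']
  ring

theorem weighted_risk_le_iff_of_mem_invSet (hreg : Regular P FΦ Fw) {s : Finset E}
    {a : E → ℝ} (ha : ∑ e ∈ s, a e = 1)
    {w w' : (Fin q → ℝ) → ℝ} {Φ Φ' : (Fin p → ℝ) → (Fin q → ℝ)} (hw : w ∈ Fw) (hw' : w' ∈ Fw)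
    (hΦ : Φ ∈ InvSet P FΦ Fw) (hΦ' : Φ' ∈ InvSet P FΦ Fw) (e₀ : E) :
    ∑ e ∈ s, a e * risk P (fun x => w (Φ x)) e ≤ ∑ e ∈ s, a e * risk P (fun x => w' (Φ' x)) e ↔
      risk P (fun x => w (Φ x)) e₀ ≤ risk P (fun x => w' (Φ' x)) e₀ := by
  rw [← sub_nonpos, Finset.sum_mul_sub_sum_mul_of_sub_eq ha
    fun e _ => risk_sub_risk_of_mem_invSet hreg hw hw' hΦ hΦ' e e₀, sub_nonpos]

theorem trFeas_eq_invSet {Etr : Finset E} (hdiv : Diversity P Etr FΦ Fw) :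
    TrFeas P Etr FΦ Fw = InvSet P FΦ Fw := by
  refine Set.Subset.antisymm (fun Φ hΦ => ?_) fun Φ hΦ =>
    ⟨hΦ.1, fun u hu e _ e' _ => hΦ.2 u hu e e'⟩
  by_contra hnot
  obtain ⟨u, hu, e, he, e', he', hcov | hsq⟩ := hdiv Φ hΦ.1 hnot
  · exact hcov (hΦ.2 u hu e he e' he').1
  · exact hsq (hΦ.2 u hu e he e' he').2

def IsInvariantRiskMin (P : E → Measure ((Fin p → ℝ) × ℝ))
    (FΦ : Set ((Fin p → ℝ) → (Fin q → ℝ))) (Fw : Set ((Fin q → ℝ) → ℝ)) (e₀ : E)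
    (w : (Fin q → ℝ) → ℝ) (Φ : (Fin p → ℝ) → (Fin q → ℝ)) : Prop :=
  w ∈ Fw ∧ Φ ∈ InvSet P FΦ Fw ∧
  ∀ w' ∈ Fw, ∀ Φ' ∈ InvSet P FΦ Fw,
    risk P (fun x => w (Φ x)) e₀ ≤ risk P (fun x => w' (Φ' x)) e₀

theorem isFairmSol_iff {Etr : Finset E} {α : E → ℝ} (hreg : Regular P FΦ Fw)
    (hαsum : ∑ e ∈ Etr, α e = 1) (hdiv : Diversity P Etr FΦ Fw) (e₀ : E)
    (w : (Fin q → ℝ) → ℝ) (Φ : (Fin p → ℝ) → (Fin q → ℝ)) :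
    IsFairmSol P Etr FΦ Fw α w Φ ↔ IsInvariantRiskMin P FΦ Fw e₀ w Φ := by
  rw [IsFairmSol, trFeas_eq_invSet hdiv]
  exact and_congr_right fun hw => and_congr_right fun hΦ =>
    forall₂_congr fun _ hw' => forall₂_congr fun _ hΦ' =>
      weighted_risk_le_iff_of_mem_invSet hreg hαsum hw hw' hΦ hΦ' e₀

theorem isFullSol_iff [Fintype E] {αs : E → ℝ} (hreg : Regular P FΦ Fw)
    (hαssum : ∑ e : E, αs e = 1) (e₀ : E)
    (w : (Fin q → ℝ) → ℝ) (Φ : (Fin p → ℝ) → (Fin q → ℝ)) :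
    IsFullSol P FΦ Fw αs w Φ ↔ IsInvariantRiskMin P FΦ Fw e₀ w Φ :=
  and_congr_right fun hw => and_congr_right fun hΦ =>
    forall₂_congr fun _ hw' => forall₂_congr fun _ hΦ' =>
      weighted_risk_le_iff_of_mem_invSet hreg hαssum hw hw' hΦ hΦ' e₀

theorem IsInvariantRiskMin.risk_eq {e₀ : E} {w w' : (Fin q → ℝ) → ℝ}
    {Φ Φ' : (Fin p → ℝ) → (Fin q → ℝ)} (h : IsInvariantRiskMin P FΦ Fw e₀ w Φ)
    (h' : IsInvariantRiskMin P FΦ Fw e₀ w' Φ') :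
    risk P (fun x => w (Φ x)) e₀ = risk P (fun x => w' (Φ' x)) e₀ :=
  le_antisymm (h.2.2 w' h'.1 Φ' h'.2.1) (h'.2.2 w h.1 Φ h.2.1)

end Fairm

theorem stmt1_general {p q : ℕ} {E : Type} [Fintype E] [Nonempty E]
    (Etr : Finset E)
    (P : E → Measure ((Fin p → ℝ) × ℝ))
    (FΦ : Set ((Fin p → ℝ) → (Fin q → ℝ))) (Fw : Set ((Fin q → ℝ) → ℝ))
    (hreg : Regular P FΦ Fw)
    (αs : E → ℝ) (hαssum : ∑ e : E, αs e = 1)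
    (α : E → ℝ) (hαsum : ∑ e ∈ Etr, α e = 1)
    (hdiv : Diversity P Etr FΦ Fw) :
    ({wΦ | IsFairmSol P Etr FΦ Fw α wΦ.1 wΦ.2} :
        Set (((Fin q → ℝ) → ℝ) × ((Fin p → ℝ) → (Fin q → ℝ)))) =
      {wΦ | IsFullSol P FΦ Fw αs wΦ.1 wΦ.2} ∧
    ∀ wF ΦF wS ΦS, IsFairmSol P Etr FΦ Fw α wF ΦF → IsFullSol P FΦ Fw αs wS ΦS →
      ∀ e : E, risk P (fun x => wF (ΦF x)) e = risk P (fun x => wS (ΦS x)) e := by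
  refine ⟨Set.ext fun _ => ?_, fun wF ΦF wS ΦS hF hS e => ?_⟩
  · exact (isFairmSol_iff hreg hαsum hdiv (Classical.arbitrary E) _ _).trans
      (isFullSol_iff hreg hαssum (Classical.arbitrary E) _ _).symm
  · exact ((isFairmSol_iff hreg hαsum hdiv e _ _).mp hF).risk_eq
      ((isFullSol_iff hreg hαssum e _ _).mp hS)

/-- Under the diversity condition, if `I* ≠ ∅`, the set of FAIRM solutions
equals the set of full-information FAIRM solutions, and all of them have identical risks
in every environment. -/
theorem stmt1 {p q : ℕ} {E : Type} [Fintype E] [Nonempty E]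
    (Etr : Finset E) (hEtr : Etr.Nonempty)
    (P : E → Measure ((Fin p → ℝ) × ℝ)) [∀ e, IsProbabilityMeasure (P e)]
    (FΦ : Set ((Fin p → ℝ) → (Fin q → ℝ))) (Fw : Set ((Fin q → ℝ) → ℝ))
    (hreg : Regular P FΦ Fw)
    (αs : E → ℝ) (hαs : ∀ e, 0 < αs e) (hαssum : ∑ e : E, αs e = 1)
    (α : E → ℝ) (hα : ∀ e ∈ Etr, 0 < α e) (hαsum : ∑ e ∈ Etr, α e = 1)
    (hdiv : Diversity P Etr FΦ Fw)
    (hne : (InvSet P FΦ Fw).Nonempty) :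
    ({wΦ | IsFairmSol P Etr FΦ Fw α wΦ.1 wΦ.2} :
        Set (((Fin q → ℝ) → ℝ) × ((Fin p → ℝ) → (Fin q → ℝ)))) =
      {wΦ | IsFullSol P FΦ Fw αs wΦ.1 wΦ.2} ∧
    ∀ wF ΦF wS ΦS, IsFairmSol P Etr FΦ Fw α wF ΦF → IsFullSol P FΦ Fw αs wS ΦS →
      ∀ e : E, risk P (fun x => wF (ΦF x)) e = risk P (fun x => wS (ΦS x)) e :=
  stmt1_general Etr P FΦ Fw hreg αs hαssum α hαsum hdiv
end
end

section
/- Assume I* ≠ ∅ and conditional-mean realizability. Then for every full-information FAIRM solution (w*, Φ*) and every e ∈ E, E[y^e | σ(w*(Φ*(x^e)))] = w*(Φ*(x^e)) P^e-almost surely; that is, the full-information FAIRM prediction rule is perfectly multi-calibrated over E. -/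
open MeasureTheory

noncomputable section

/-- The σ-algebra generated by a random variable `Z` on `(Fin p → ℝ) × ℝ`. -/
def sigmaGen {p : ℕ} {β : Type*} [MeasurableSpace β] (Z : (Fin p → ℝ) × ℝ → β) :
    MeasurableSpace ((Fin p → ℝ) × ℝ) :=
  MeasurableSpace.comap Z inferInstance

/-- Conditional-mean realizability: every invariant representation admits a
conditional-mean function in `F_w`, uniformly over environments. -/
def CMR {p q : ℕ} {E : Type} (P : E → Measure ((Fin p → ℝ) × ℝ))
    (FΦ : Set ((Fin p → ℝ) → (Fin q → ℝ))) (Fw : Set ((Fin q → ℝ) → ℝ)) : Prop :=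
  ∀ Φ ∈ InvSet P FΦ Fw, ∃ w ∈ Fw, ∀ e : E,
    (P e)[(fun z : (Fin p → ℝ) × ℝ => z.2) | sigmaGen (fun z => Φ z.1)]
      =ᵐ[P e] fun z => w (Φ z.1)

/-! Realizability gives `w₀ ∈ F_w` with `w₀ ∘ Φ* = E[y | Φ*]` in every environment. By
Pythagoras in `L²`, the risk of `w* ∘ Φ*` exceeds that of `w₀ ∘ Φ*` by `‖w* ∘ Φ* - w₀ ∘ Φ*‖²`;
since `(w₀, Φ*)` is a competitor and the weights are positive, `w* ∘ Φ* = E[y | Φ*]` a.s. in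
every environment. The tower property then passes this to the coarser `σ(w* ∘ Φ*)`. -/

section ConditionalExpectation

variable {Ω : Type*} {m m' m₀ : MeasurableSpace Ω} {μ : Measure Ω} {Y F G H : Ω → ℝ}

lemma integral_mul_condExp_of_stronglyMeasurable (hm : m ≤ m₀) [SigmaFinite (μ.trim hm)]
    (hH : StronglyMeasurable[m] H) (hHY : Integrable (H * Y) μ) (hY : Integrable Y μ) :
    ∫ x, H x * μ[Y|m] x ∂μ = ∫ x, H x * Y x ∂μ :=
  calc ∫ x, H x * μ[Y|m] x ∂μ = ∫ x, μ[H * Y|m] x ∂μ :=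
        integral_congr_ae (condExp_mul_of_stronglyMeasurable_left hH hHY hY).symm
    _ = ∫ x, H x * Y x ∂μ := integral_condExp hm

/-- Pythagoras in `L²(μ)`: the residual `Y - G` of the conditional expectation `G` is orthogonal
to every `m`-measurable `G - F`. -/
lemma integral_sq_sub_eq_add_of_condExp_ae_eq [IsFiniteMeasure μ] (hm : m ≤ m₀)
    (hY : MemLp Y 2 μ) (hF : MemLp F 2 μ) (hG : MemLp G 2 μ)
    (hFm : StronglyMeasurable[m] F) (hGm : StronglyMeasurable[m] G) (hYG : μ[Y|m] =ᵐ[μ] G) :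
    ∫ x, (Y x - F x) ^ 2 ∂μ = ∫ x, (Y x - G x) ^ 2 ∂μ + ∫ x, (F x - G x) ^ 2 ∂μ := by
  have hGF : MemLp (G - F) 2 μ := hG.sub hF
  have hGFY : Integrable (fun x => (G - F) x * Y x) μ := hGF.integrable_mul hY
  have hGFG : Integrable (fun x => (G - F) x * G x) μ := hGF.integrable_mul hG
  have hYG2 : Integrable (fun x => (Y x - G x) ^ 2) μ := (hY.sub hG).integrable_sq
  have hFG2 : Integrable (fun x => (F x - G x) ^ 2) μ := (hF.sub hG).integrable_sq
  have horth : ∫ x, (G - F) x * (Y x - G x) ∂μ = 0 := by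
    have hcond : ∫ x, (G - F) x * Y x ∂μ = ∫ x, (G - F) x * G x ∂μ := by
      rw [← integral_mul_condExp_of_stronglyMeasurable hm (hGm.sub hFm) hGFY
        (hY.integrable one_le_two)]
      refine integral_congr_ae ?_
      filter_upwards [hYG] with x hx
      rw [hx]
    simp only [mul_sub]
    rw [integral_sub hGFY hGFG, hcond, sub_self]
  have hsplit : (fun x => (Y x - F x) ^ 2) =
      fun x => ((Y x - G x) ^ 2 + (F x - G x) ^ 2) + 2 * ((G - F) x * (Y x - G x)) := by
    funext x; simp only [Pi.sub_apply]; ring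
  have hsum : Integrable (fun x => (Y x - G x) ^ 2 + (F x - G x) ^ 2) μ := hYG2.add hFG2
  have hcross : Integrable (fun x => 2 * ((G - F) x * (Y x - G x))) μ :=
    (hGF.integrable_mul (hY.sub hG)).const_mul 2
  rw [hsplit, integral_add hsum hcross, integral_add hYG2 hFG2, integral_const_mul, horth,
    mul_zero, add_zero]

lemma ae_eq_of_integral_sq_sub_eq_zero (hF : MemLp F 2 μ) (hG : MemLp G 2 μ)
    (h : ∫ x, (F x - G x) ^ 2 ∂μ = 0) : F =ᵐ[μ] G := by
  have hsq : (fun x => (F x - G x) ^ 2) =ᵐ[μ] 0 :=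
    (integral_eq_zero_iff_of_nonneg (fun x => sq_nonneg _) (hF.sub hG).integrable_sq).mp h
  filter_upwards [hsq] with x hx
  exact sub_eq_zero.mp (pow_eq_zero_iff two_ne_zero |>.mp hx)

lemma condExp_ae_eq_of_condExp_ae_eq_of_le [IsFiniteMeasure μ] (hm' : m' ≤ m) (hm : m ≤ m₀)
    (hYF : μ[Y|m] =ᵐ[μ] F) (hF : StronglyMeasurable[m'] F) (hFint : Integrable F μ) :
    μ[Y|m'] =ᵐ[μ] F :=
  calc μ[Y|m'] =ᵐ[μ] μ[μ[Y|m]|m'] := (condExp_condExp_of_le hm' hm).symm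
    _ =ᵐ[μ] μ[F|m'] := condExp_congr_ae hYF
    _ = F := condExp_of_stronglyMeasurable (hm'.trans hm) hF hFint

end ConditionalExpectation

lemma eq_zero_of_sum_mul_nonpos {ι : Type*} {s : Finset ι} {α a : ι → ℝ}
    (hα : ∀ i ∈ s, 0 < α i) (ha : ∀ i ∈ s, 0 ≤ a i) (h : ∑ i ∈ s, α i * a i ≤ 0) :
    ∀ i ∈ s, a i = 0 := by
  have hnonneg : ∀ i ∈ s, 0 ≤ α i * a i := fun i hi => mul_nonneg (hα i hi).le (ha i hi)
  have hzero := (Finset.sum_eq_zero_iff_of_nonneg hnonneg).mp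
    (le_antisymm h (Finset.sum_nonneg hnonneg))
  exact fun i hi => (mul_eq_zero.mp (hzero i hi)).resolve_left (hα i hi).ne'

lemma sigmaGen_le {p : ℕ} {β : Type*} [MeasurableSpace β] {Z : (Fin p → ℝ) × ℝ → β}
    (hZ : Measurable Z) : sigmaGen Z ≤ (inferInstance : MeasurableSpace ((Fin p → ℝ) × ℝ)) :=
  hZ.comap_le

lemma sigmaGen_comp_le {p : ℕ} {β γ : Type*} [MeasurableSpace β] [MeasurableSpace γ]
    (Z : (Fin p → ℝ) × ℝ → β) {u : β → γ} (hu : Measurable u) :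
    sigmaGen (fun z => u (Z z)) ≤ sigmaGen Z :=
  (hu.comp (comap_measurable Z)).comap_le

lemma stronglyMeasurable_sigmaGen {p : ℕ} (Z : (Fin p → ℝ) × ℝ → ℝ) :
    StronglyMeasurable[sigmaGen Z] Z :=
  (comap_measurable Z).stronglyMeasurable

section Regular

variable {p q : ℕ} {E : Type} {P : E → Measure ((Fin p → ℝ) × ℝ)}
  {FΦ : Set ((Fin p → ℝ) → (Fin q → ℝ))} {Fw : Set ((Fin q → ℝ) → ℝ)}
  {Φ : (Fin p → ℝ) → (Fin q → ℝ)} {w w₀ : (Fin q → ℝ) → ℝ}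

lemma Regular.measurable_comp (hreg : Regular P FΦ Fw) (hΦ : Φ ∈ FΦ) (hw : w ∈ Fw) :
    Measurable fun z : (Fin p → ℝ) × ℝ => w (Φ z.1) :=
  (hreg.2.1 w hw).comp ((hreg.1 Φ hΦ).comp measurable_fst)

lemma Regular.memLp_comp (hreg : Regular P FΦ Fw) (hΦ : Φ ∈ FΦ) (hw : w ∈ Fw) (e : E) :
    MemLp (fun z : (Fin p → ℝ) × ℝ => w (Φ z.1)) 2 (P e) :=
  (memLp_two_iff_integrable_sq (hreg.measurable_comp hΦ hw).aestronglyMeasurable).mpr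
    (hreg.2.2.2.2 Φ hΦ w hw e).2.1

lemma Regular.risk_eq_risk_add_of_condExp (hreg : Regular P FΦ Fw) (hΦ : Φ ∈ FΦ)
    (hw : w ∈ Fw) (hw₀ : w₀ ∈ Fw) (e : E) [IsFiniteMeasure (P e)]
    (hcond : (P e)[(fun z : (Fin p → ℝ) × ℝ => z.2) | sigmaGen (fun z => Φ z.1)]
      =ᵐ[P e] fun z => w₀ (Φ z.1)) :
    risk P (fun x => w (Φ x)) e =
      risk P (fun x => w₀ (Φ x)) e + ∫ z, (w (Φ z.1) - w₀ (Φ z.1)) ^ 2 ∂(P e) :=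
  integral_sq_sub_eq_add_of_condExp_ae_eq (sigmaGen_le ((hreg.1 Φ hΦ).comp measurable_fst))
    (hreg.2.2.1 e) (hreg.memLp_comp hΦ hw e) (hreg.memLp_comp hΦ hw₀ e)
    ((hreg.2.1 w hw).comp (comap_measurable _)).stronglyMeasurable
    ((hreg.2.1 w₀ hw₀).comp (comap_measurable _)).stronglyMeasurable hcond

end Regular

theorem stmt4_general {p q : ℕ} {E : Type} [Fintype E]
    (P : E → Measure ((Fin p → ℝ) × ℝ)) [∀ e, IsProbabilityMeasure (P e)]
    (FΦ : Set ((Fin p → ℝ) → (Fin q → ℝ))) (Fw : Set ((Fin q → ℝ) → ℝ))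
    (hreg : Regular P FΦ Fw)
    (αs : E → ℝ) (hαs : ∀ e, 0 < αs e)
    (hcmr : CMR P FΦ Fw)
    (wstar : (Fin q → ℝ) → ℝ) (Φstar : (Fin p → ℝ) → (Fin q → ℝ))
    (hsol : IsFullSol P FΦ Fw αs wstar Φstar) :
    ∀ e : E,
      (P e)[(fun z : (Fin p → ℝ) × ℝ => z.2) |
          sigmaGen (fun z => wstar (Φstar z.1))]
        =ᵐ[P e] fun z => wstar (Φstar z.1) := by
  obtain ⟨hw, hΦ, hmin⟩ := hsol
  obtain ⟨w₀, hw₀, hcond⟩ := hcmr Φstar hΦ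
  have hdecomp e := hreg.risk_eq_risk_add_of_condExp hΦ.1 hw hw₀ e (hcond e)
  have hgap : ∀ e ∈ Finset.univ, ∫ z, (wstar (Φstar z.1) - w₀ (Φstar z.1)) ^ 2 ∂(P e) = 0 := by
    refine eq_zero_of_sum_mul_nonpos (fun e _ => hαs e)
      (fun e _ => integral_nonneg fun z => sq_nonneg _) ?_
    have hle := hmin w₀ hw₀ Φstar hΦ
    simp only [hdecomp, mul_add, Finset.sum_add_distrib] at hle
    linarith
  intro e
  have hFG := ae_eq_of_integral_sq_sub_eq_zero (hreg.memLp_comp hΦ.1 hw e)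
    (hreg.memLp_comp hΦ.1 hw₀ e) (hgap e (Finset.mem_univ e))
  exact condExp_ae_eq_of_condExp_ae_eq_of_le (sigmaGen_comp_le _ (hreg.2.1 wstar hw))
    (sigmaGen_le ((hreg.1 Φstar hΦ.1).comp measurable_fst)) ((hcond e).trans hFG.symm)
    (stronglyMeasurable_sigmaGen _) ((hreg.memLp_comp hΦ.1 hw e).integrable one_le_two)

/-- Under `I* ≠ ∅` and conditional-mean realizability, every
full-information FAIRM solution is perfectly multi-calibrated over `E`:
`E[y^e | σ(w*(Φ*(x^e)))] = w*(Φ*(x^e))` a.s. for every `e`. -/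
theorem stmt4 {p q : ℕ} {E : Type} [Fintype E] [Nonempty E]
    (P : E → Measure ((Fin p → ℝ) × ℝ)) [∀ e, IsProbabilityMeasure (P e)]
    (FΦ : Set ((Fin p → ℝ) → (Fin q → ℝ))) (Fw : Set ((Fin q → ℝ) → ℝ))
    (hreg : Regular P FΦ Fw)
    (αs : E → ℝ) (hαs : ∀ e, 0 < αs e) (hαssum : ∑ e : E, αs e = 1)
    (hne : (InvSet P FΦ Fw).Nonempty)
    (hcmr : CMR P FΦ Fw)
    (wstar : (Fin q → ℝ) → ℝ) (Φstar : (Fin p → ℝ) → (Fin q → ℝ))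
    (hsol : IsFullSol P FΦ Fw αs wstar Φstar) :
    ∀ e : E,
      (P e)[(fun z : (Fin p → ℝ) × ℝ => z.2) |
          sigmaGen (fun z => wstar (Φstar z.1))]
        =ᵐ[P e] fun z => wstar (Φstar z.1) :=
  stmt4_general P FΦ Fw hreg αs hαs hcmr wstar Φstar hsol
end
end

section
/- Assume the uniform-deviation hypothesis and the empirical diversity condition. Then the empirical feasible set equals I*: every Φ ∈ I* is empirically feasible, and every empirically feasible Φ ∈ F_Φ belongs to I*. -/
open MeasureTheory

noncomputable section

/-- Empirical covariance-type moment `n_e⁻¹ Σ_i u(Φ(x_i^e))·y_i^e`. -/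
def empCov {p q : ℕ} {E : Type} (n : E → ℕ)
    (X : (e : E) → Fin (n e) → (Fin p → ℝ)) (Y : (e : E) → Fin (n e) → ℝ)
    (Φ : (Fin p → ℝ) → (Fin q → ℝ)) (u : (Fin q → ℝ) → ℝ) (e : E) : ℝ :=
  (∑ i, u (Φ (X e i)) * Y e i) / (n e : ℝ)

/-- Empirical second moment `n_e⁻¹ Σ_i u(Φ(x_i^e))²`. -/
def empSq {p q : ℕ} {E : Type} (n : E → ℕ)
    (X : (e : E) → Fin (n e) → (Fin p → ℝ))
    (Φ : (Fin p → ℝ) → (Fin q → ℝ)) (u : (Fin q → ℝ) → ℝ) (e : E) : ℝ :=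
  (∑ i, (u (Φ (X e i))) ^ 2) / (n e : ℝ)

/-- Uniform-deviation hypothesis with levels `ρ₁/2` and `ρ₂/2`. -/
def UnifDev {p q : ℕ} {E : Type} (P : E → Measure ((Fin p → ℝ) × ℝ)) (Etr : Finset E)
    (FΦ : Set ((Fin p → ℝ) → (Fin q → ℝ))) (Fw : Set ((Fin q → ℝ) → ℝ))
    (n : E → ℕ) (X : (e : E) → Fin (n e) → (Fin p → ℝ)) (Y : (e : E) → Fin (n e) → ℝ)
    (ρ1 ρ2 : ℝ) : Prop :=
  ∀ u ∈ Fw, ∀ Φ ∈ FΦ, ∀ e ∈ Etr,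
    |empCov n X Y Φ u e - covT P Φ u e| ≤ ρ1 / 2 ∧
    |empSq n X Φ u e - sqT P Φ u e| ≤ ρ2 / 2

/-- Empirical diversity condition. -/
def EmpDiv {p q : ℕ} {E : Type} (P : E → Measure ((Fin p → ℝ) × ℝ)) (Etr : Finset E)
    (FΦ : Set ((Fin p → ℝ) → (Fin q → ℝ))) (Fw : Set ((Fin q → ℝ) → ℝ))
    (ρ1 ρ2 : ℝ) : Prop :=
  ∀ Φ ∈ FΦ, Φ ∉ InvSet P FΦ Fw → ∃ u ∈ Fw, ∃ e ∈ Etr, ∃ e' ∈ Etr,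
    2 * ρ1 < |covT P Φ u e - covT P Φ u e'| ∨ 2 * ρ2 < |sqT P Φ u e - sqT P Φ u e'|

/-- The empirically feasible set. -/
def EmpFeas {p q : ℕ} {E : Type} (Etr : Finset E)
    (FΦ : Set ((Fin p → ℝ) → (Fin q → ℝ))) (Fw : Set ((Fin q → ℝ) → ℝ))
    (n : E → ℕ) (X : (e : E) → Fin (n e) → (Fin p → ℝ)) (Y : (e : E) → Fin (n e) → ℝ)
    (ρ1 ρ2 : ℝ) : Set ((Fin p → ℝ) → (Fin q → ℝ)) :=
  {Φ | Φ ∈ FΦ ∧ ∀ u ∈ Fw, ∀ e ∈ Etr, ∀ e' ∈ Etr,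
    |empCov n X Y Φ u e - empCov n X Y Φ u e'| ≤ ρ1 ∧
    |empSq n X Φ u e - empSq n X Φ u e'| ≤ ρ2}

/-- An empirical FAIRM solution: minimizer of the empirical squared loss over
`F_w ×` (the empirically feasible set). -/
def IsEmpFairmSol {p q : ℕ} {E : Type} (Etr : Finset E)
    (FΦ : Set ((Fin p → ℝ) → (Fin q → ℝ))) (Fw : Set ((Fin q → ℝ) → ℝ))
    (n : E → ℕ) (X : (e : E) → Fin (n e) → (Fin p → ℝ)) (Y : (e : E) → Fin (n e) → ℝ)
    (ρ1 ρ2 : ℝ)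
    (w : (Fin q → ℝ) → ℝ) (Φ : (Fin p → ℝ) → (Fin q → ℝ)) : Prop :=
  w ∈ Fw ∧ Φ ∈ EmpFeas Etr FΦ Fw n X Y ρ1 ρ2 ∧
  ∀ w' ∈ Fw, ∀ Φ' ∈ EmpFeas Etr FΦ Fw n X Y ρ1 ρ2,
    ∑ e ∈ Etr, ∑ i, (Y e i - w (Φ (X e i))) ^ 2 ≤
      ∑ e ∈ Etr, ∑ i, (Y e i - w' (Φ' (X e i))) ^ 2

theorem abs_sub_le_of_abs_sub_le {α : Type*} [AddCommGroup α] [LinearOrder α]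
    [IsOrderedAddMonoid α] {a b a' b' δ ε : α}
    (ha : |a' - a| ≤ δ) (hb : |b' - b| ≤ δ) (hab : |a - b| ≤ ε) :
    |a' - b'| ≤ δ + ε + δ :=
  calc |a' - b'| ≤ |a' - b| + |b - b'| := abs_sub_le _ _ _
    _ ≤ |a' - a| + |a - b| + |b - b'| := by gcongr; exact abs_sub_le _ _ _
    _ ≤ δ + ε + δ := by rw [abs_sub_comm b]; gcongr

section UniformDeviation

variable {p q : ℕ} {E : Type} {Etr : Finset E} {P : E → Measure ((Fin p → ℝ) × ℝ)}
  {FΦ : Set ((Fin p → ℝ) → (Fin q → ℝ))} {Fw : Set ((Fin q → ℝ) → ℝ)} {n : E → ℕ}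
  {X : (e : E) → Fin (n e) → (Fin p → ℝ)} {Y : (e : E) → Fin (n e) → ℝ} {ρ1 ρ2 : ℝ}

theorem mem_empFeas_of_mem_invSet (hdev : UnifDev P Etr FΦ Fw n X Y ρ1 ρ2)
    {Φ : (Fin p → ℝ) → (Fin q → ℝ)} (hΦ : Φ ∈ InvSet P FΦ Fw) :
    Φ ∈ EmpFeas Etr FΦ Fw n X Y ρ1 ρ2 := by
  obtain ⟨hΦF, hinv⟩ := hΦ
  refine ⟨hΦF, fun u hu e he e' he' => ?_⟩
  obtain ⟨hcov, hsq⟩ := hdev u hu Φ hΦF e he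
  obtain ⟨hcov', hsq'⟩ := hdev u hu Φ hΦF e' he'
  obtain ⟨hcov_eq, hsq_eq⟩ := hinv u hu e e'
  constructor
  · simpa using abs_sub_le_of_abs_sub_le hcov hcov' (by simp [hcov_eq] : _ ≤ (0 : ℝ))
  · simpa using abs_sub_le_of_abs_sub_le hsq hsq' (by simp [hsq_eq] : _ ≤ (0 : ℝ))

theorem abs_sub_covT_sqT_le_of_mem_empFeas (hdev : UnifDev P Etr FΦ Fw n X Y ρ1 ρ2)
    {Φ : (Fin p → ℝ) → (Fin q → ℝ)} (hΦ : Φ ∈ EmpFeas Etr FΦ Fw n X Y ρ1 ρ2)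
    {u : (Fin q → ℝ) → ℝ} (hu : u ∈ Fw) {e e' : E} (he : e ∈ Etr) (he' : e' ∈ Etr) :
    |covT P Φ u e - covT P Φ u e'| ≤ 2 * ρ1 ∧ |sqT P Φ u e - sqT P Φ u e'| ≤ 2 * ρ2 := by
  obtain ⟨hΦF, hfeas⟩ := hΦ
  obtain ⟨hcov, hsq⟩ := hdev u hu Φ hΦF e he
  obtain ⟨hcov', hsq'⟩ := hdev u hu Φ hΦF e' he'
  rw [abs_sub_comm] at hcov hsq hcov' hsq'
  obtain ⟨hemp_cov, hemp_sq⟩ := hfeas u hu e he e' he'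
  constructor
  · linarith [abs_sub_le_of_abs_sub_le hcov hcov' hemp_cov]
  · linarith [abs_sub_le_of_abs_sub_le hsq hsq' hemp_sq]

theorem mem_invSet_of_mem_empFeas (hdev : UnifDev P Etr FΦ Fw n X Y ρ1 ρ2)
    (hdiv : EmpDiv P Etr FΦ Fw ρ1 ρ2) {Φ : (Fin p → ℝ) → (Fin q → ℝ)}
    (hΦ : Φ ∈ EmpFeas Etr FΦ Fw n X Y ρ1 ρ2) : Φ ∈ InvSet P FΦ Fw := by
  by_contra hnot
  obtain ⟨u, hu, e, he, e', he', hgap⟩ := hdiv Φ hΦ.1 hnot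
  obtain ⟨hcov, hsq⟩ := abs_sub_covT_sqT_le_of_mem_empFeas hdev hΦ hu he he'
  rcases hgap with hgap | hgap <;> linarith

end UniformDeviation

theorem stmt12_general {p q : ℕ} {E : Type}
    (Etr : Finset E)
    (P : E → Measure ((Fin p → ℝ) × ℝ))
    (FΦ : Set ((Fin p → ℝ) → (Fin q → ℝ))) (Fw : Set ((Fin q → ℝ) → ℝ))
    (n : E → ℕ)
    (X : (e : E) → Fin (n e) → (Fin p → ℝ)) (Y : (e : E) → Fin (n e) → ℝ)
    (ρ1 ρ2 : ℝ)
    (hdev : UnifDev P Etr FΦ Fw n X Y ρ1 ρ2)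
    (hdiv : EmpDiv P Etr FΦ Fw ρ1 ρ2) :
    EmpFeas Etr FΦ Fw n X Y ρ1 ρ2 = InvSet P FΦ Fw :=
  Set.Subset.antisymm (fun _ => mem_invSet_of_mem_empFeas hdev hdiv)
    (fun _ => mem_empFeas_of_mem_invSet hdev)

/-- under the uniform-deviation hypothesis and the empirical diversity
condition, the empirical feasible set equals `I*`. -/
theorem stmt12 {p q : ℕ} {E : Type} [Fintype E] [Nonempty E]
    (Etr : Finset E) (hEtr : Etr.Nonempty)
    (P : E → Measure ((Fin p → ℝ) × ℝ)) [∀ e, IsProbabilityMeasure (P e)]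
    (FΦ : Set ((Fin p → ℝ) → (Fin q → ℝ))) (Fw : Set ((Fin q → ℝ) → ℝ))
    (hreg : Regular P FΦ Fw)
    (n : E → ℕ) (hn : ∀ e ∈ Etr, 0 < n e)
    (X : (e : E) → Fin (n e) → (Fin p → ℝ)) (Y : (e : E) → Fin (n e) → ℝ)
    (ρ1 ρ2 : ℝ) (hρ1 : 0 < ρ1) (hρ2 : 0 < ρ2)
    (hdev : UnifDev P Etr FΦ Fw n X Y ρ1 ρ2)
    (hdiv : EmpDiv P Etr FΦ Fw ρ1 ρ2) :
    EmpFeas Etr FΦ Fw n X Y ρ1 ρ2 = InvSet P FΦ Fw :=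
  stmt12_general Etr P FΦ Fw n X Y ρ1 ρ2 hdev hdiv
end
end
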